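/- Let v and w be words over {0,1,•} of lengths M−1 and N−1 respectively. Then Δ ↦ dec(Δ) is a bijection from the set of M,N-invariant sets fitting (0v, 1w) onto the set of M,N-invariant sets fitting (v•, w1); moreover, for Δ fitting (0v, 1w), area(dec(Δ)) = area(Δ) and pdinv(dec(Δ)) = pdinv(Δ). -/
import Mathlib


/-- The alphabet {0, 1, •}. -/
inductive Symb where
  | zero : Symb
  | one : Symb
  | bullet : Symb
deriving DecidableEq

/-- An `M,N`-invariant set: a subset of ℕ with finite complement,
closed under adding `M` and adding `N`. -/
def Invariant (M N : ℕ) (Δ : Set ℕ) : Prop :=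
  {n : ℕ | n ∉ Δ}.Finite ∧ ∀ i ∈ Δ, i + M ∈ Δ ∧ i + N ∈ Δ

/-- `c` is a north step of `Δ`: `c ∉ Δ` and `c + N ∈ Δ`. -/
def NorthStep (N : ℕ) (Δ : Set ℕ) (c : ℕ) : Prop := c ∉ Δ ∧ c + N ∈ Δ

/-- `c` is an east step of `Δ`: `c ∉ Δ` and `c + M ∈ Δ`. -/
def EastStep (M : ℕ) (Δ : Set ℕ) (c : ℕ) : Prop := c ∉ Δ ∧ c + M ∈ Δ

/-- `area Δ` is the number of `c ≥ M + N` with `c ∉ Δ`. -/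
noncomputable def area (M N : ℕ) (Δ : Set ℕ) : ℕ := {c : ℕ | M + N ≤ c ∧ c ∉ Δ}.ncard

/-- `pdinv Δ` is the number of pairs `(c, d)` with `c < d`, `M ≤ d < c + M`,
`c` a north step of `Δ`, and `d ∉ Δ`. -/
noncomputable def pdinv (M N : ℕ) (Δ : Set ℕ) : ℕ :=
  {p : ℕ × ℕ | p.1 < p.2 ∧ M ≤ p.2 ∧ p.2 < p.1 + M ∧ NorthStep N Δ p.1 ∧ p.2 ∉ Δ}.ncard

/-- `Δ` fits the pair of words `(v, w)`, where `v` has length `M` and `w` has length `N`. -/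
def Fits (M N : ℕ) (Δ : Set ℕ) (v w : List Symb) : Prop :=
  v.length = M ∧ w.length = N ∧
  (∀ (i : ℕ) (hi : i < v.length),
    (v.get ⟨i, hi⟩ = Symb.bullet ↔ i ∈ Δ) ∧
    (v.get ⟨i, hi⟩ = Symb.one ↔ NorthStep N Δ i) ∧
    (v.get ⟨i, hi⟩ = Symb.zero ↔ (i ∉ Δ ∧ i + N ∉ Δ))) ∧
  (∀ (i : ℕ) (hi : i < w.length),
    (w.get ⟨i, hi⟩ = Symb.bullet ↔ i ∈ Δ) ∧
    (w.get ⟨i, hi⟩ = Symb.one ↔ EastStep M Δ i) ∧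
    (w.get ⟨i, hi⟩ = Symb.zero ↔ (i ∉ Δ ∧ i + M ∉ Δ)))

/-- Decrement: `dec Δ = {i : ℕ | i + 1 ∈ Δ}`. -/
def dec (Δ : Set ℕ) : Set ℕ := {i : ℕ | i + 1 ∈ Δ}

/-! ### Auxiliary material -/

/-- Increment: the inverse of `dec` on sets not containing 0. -/
def inc (Γ : Set ℕ) : Set ℕ := {i : ℕ | ∃ j ∈ Γ, j + 1 = i}

lemma mem_dec_iff (Δ : Set ℕ) (i : ℕ) : i ∈ dec Δ ↔ i + 1 ∈ Δ := Iff.rfl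

lemma mem_inc_succ (Γ : Set ℕ) (i : ℕ) : i + 1 ∈ inc Γ ↔ i ∈ Γ := by
  constructor
  · rintro ⟨j, hj, h⟩
    obtain rfl : j = i := by omega
    exact hj
  · intro h; exact ⟨i, h, rfl⟩

lemma zero_not_mem_inc (Γ : Set ℕ) : 0 ∉ inc Γ := by
  rintro ⟨j, _, h⟩; omega

lemma dec_inc (Γ : Set ℕ) : dec (inc Γ) = Γ := by
  ext i; exact mem_inc_succ Γ i

/-- Basic facts extracted from `Δ` fitting `(0v, 1w)`. -/
lemma fits_src_facts {M N : ℕ} {Δ : Set ℕ} {v w : List Symb}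
    (hf : Fits M N Δ (Symb.zero :: v) (Symb.one :: w)) :
    0 ∉ Δ ∧ N ∉ Δ ∧ M ∈ Δ := by
  obtain ⟨hv', hw', hA, hB⟩ := hf
  have h1 := ((hA 0 (by simp)).2.2).mp (by simp)
  have h2 := ((hB 0 (by simp)).2.1).mp (by simp)
  refine ⟨h1.1, by simpa using h1.2, by simpa using h2.2⟩

/-- Basic facts extracted from `Γ` fitting `(v•, w1)`. -/
lemma fits_tgt_facts {M N : ℕ} {Γ : Set ℕ} {v w : List Symb}
    (hf : Fits M N Γ (v ++ [Symb.bullet]) (w ++ [Symb.one])) :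
    v.length ∈ Γ ∧ w.length ∉ Γ ∧ w.length + M ∈ Γ := by
  obtain ⟨hv', hw', hA, hB⟩ := hf
  have hgv : (v ++ [Symb.bullet]).get ⟨v.length, by simp⟩ = Symb.bullet := by
    simp [List.get_eq_getElem]
  have hgw : (w ++ [Symb.one]).get ⟨w.length, by simp⟩ = Symb.one := by
    simp [List.get_eq_getElem]
  have h1 := ((hA v.length (by simp)).1).mp hgv
  have h2 := ((hB w.length (by simp)).2.1).mp hgw
  exact ⟨h1, h2.1, h2.2⟩

lemma invariant_dec {M N : ℕ} {Δ : Set ℕ} (hI : Invariant M N Δ) :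
    Invariant M N (dec Δ) := by
  obtain ⟨hfin, hcl⟩ := hI
  constructor
  · have : {n : ℕ | n ∉ dec Δ} = (· + 1) ⁻¹' {n : ℕ | n ∉ Δ} := rfl
    rw [this]
    exact hfin.preimage (Function.Injective.injOn (fun a b h => by omega))
  · intro i hi
    have h := hcl (i + 1) hi
    constructor
    · show i + M + 1 ∈ Δ
      rw [Nat.add_right_comm]; exact h.1
    · show i + N + 1 ∈ Δ
      rw [Nat.add_right_comm]; exact h.2

lemma invariant_inc {M N : ℕ} {Γ : Set ℕ} (hI : Invariant M N Γ) :
    Invariant M N (inc Γ) := by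
  obtain ⟨hfin, hcl⟩ := hI
  constructor
  · apply Set.Finite.subset (Set.Finite.insert 0 (hfin.image (· + 1)))
    intro n hn
    match n with
    | 0 => exact Set.mem_insert _ _
    | m + 1 =>
      right
      refine ⟨m, ?_, rfl⟩
      intro hm
      exact hn ((mem_inc_succ Γ m).mpr hm)
  · rintro n ⟨j, hj, rfl⟩
    have h := hcl j hj
    exact ⟨⟨j + M, h.1, by omega⟩, ⟨j + N, h.2, by omega⟩⟩

lemma fits_dec {M N : ℕ} {Δ : Set ℕ} {v w : List Symb}
    (hv : v.length + 1 = M) (hw : w.length + 1 = N)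
    (hI : Invariant M N Δ) (hf : Fits M N Δ (Symb.zero :: v) (Symb.one :: w)) :
    Fits M N (dec Δ) (v ++ [Symb.bullet]) (w ++ [Symb.one]) := by
  obtain ⟨h0, hNn, hMm⟩ := fits_src_facts hf
  obtain ⟨hfin, hcl⟩ := hI
  obtain ⟨_, _, hA, hB⟩ := hf
  have hMdec : v.length ∈ dec Δ := by
    show v.length + 1 ∈ Δ; rw [hv]; exact hMm
  have hNdec : w.length ∉ dec Δ := by
    show w.length + 1 ∉ Δ; rw [hw]; exact hNn
  have hNMdec : w.length + M ∈ dec Δ := by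
    show w.length + M + 1 ∈ Δ
    have : w.length + M + 1 = M + N := by omega
    rw [this]
    exact (hcl M hMm).2
  refine ⟨by simp [hv], by simp [hw], ?_, ?_⟩
  · intro i hi
    simp only [List.length_append, List.length_singleton] at hi
    rcases Nat.lt_or_ge i v.length with hlt | hge
    · have hgi : (v ++ [Symb.bullet]).get ⟨i, by simp; omega⟩ =
          (Symb.zero :: v).get ⟨i + 1, by simp; omega⟩ := by
        simp [List.get_eq_getElem, List.getElem_append_left hlt]
      obtain ⟨c1, c2, c3⟩ := hA (i + 1) (by simp; omega)
      rw [hgi]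
      refine ⟨?_, ?_, ?_⟩
      · rw [c1]; rfl
      · rw [c2]
        simp only [NorthStep, dec, Set.mem_setOf_eq, Nat.add_right_comm i N 1]
      · rw [c3]
        simp only [dec, Set.mem_setOf_eq, Nat.add_right_comm i N 1]
    · have hie : i = v.length := by omega
      subst hie
      have hgi : (v ++ [Symb.bullet]).get ⟨v.length, by simp⟩ = Symb.bullet := by
        simp [List.get_eq_getElem]
      rw [hgi]
      refine ⟨by simp [hMdec], ?_, ?_⟩
      · simp only [NorthStep]
        constructor
        · intro h; exact absurd h (by simp)
        · intro h; exact absurd hMdec h.1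
      · constructor
        · intro h; exact absurd h (by simp)
        · intro h; exact absurd hMdec h.1
  · intro i hi
    simp only [List.length_append, List.length_singleton] at hi
    rcases Nat.lt_or_ge i w.length with hlt | hge
    · have hgi : (w ++ [Symb.one]).get ⟨i, by simp; omega⟩ =
          (Symb.one :: w).get ⟨i + 1, by simp; omega⟩ := by
        simp [List.get_eq_getElem, List.getElem_append_left hlt]
      obtain ⟨c1, c2, c3⟩ := hB (i + 1) (by simp; omega)
      rw [hgi]
      refine ⟨?_, ?_, ?_⟩
      · rw [c1]; rfl
      · rw [c2]
        simp only [EastStep, dec, Set.mem_setOf_eq, Nat.add_right_comm i M 1]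
      · rw [c3]
        simp only [dec, Set.mem_setOf_eq, Nat.add_right_comm i M 1]
    · have hie : i = w.length := by omega
      subst hie
      have hgi : (w ++ [Symb.one]).get ⟨w.length, by simp⟩ = Symb.one := by
        simp [List.get_eq_getElem]
      rw [hgi]
      refine ⟨?_, ?_, ?_⟩
      · constructor
        · intro h; exact absurd h (by simp)
        · intro h; exact absurd h hNdec
      · exact ⟨fun _ => ⟨hNdec, hNMdec⟩, fun _ => rfl⟩
      · constructor
        · intro h; exact absurd h (by simp)
        · intro h; exact absurd hNMdec h.2

lemma fits_inc {M N : ℕ} {Γ : Set ℕ} {v w : List Symb}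
    (hv : v.length + 1 = M) (hw : w.length + 1 = N) (hI : Invariant M N Γ)
    (hf : Fits M N Γ (v ++ [Symb.bullet]) (w ++ [Symb.one])) :
    Fits M N (inc Γ) (Symb.zero :: v) (Symb.one :: w) := by
  obtain ⟨hvΓ, hwΓ, _⟩ := fits_tgt_facts hf
  obtain ⟨_, _, hA, hB⟩ := hf
  have hMi : M ∈ inc Γ := by rw [← hv]; exact (mem_inc_succ Γ v.length).mpr hvΓ
  have hNi : N ∉ inc Γ := by
    rw [← hw]
    exact fun h => hwΓ ((mem_inc_succ Γ w.length).mp h)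
  have h0i : (0 : ℕ) ∉ inc Γ := zero_not_mem_inc Γ
  refine ⟨by simp [hv], by simp [hw], ?_, ?_⟩
  · intro i hi
    simp only [List.length_cons] at hi
    match i with
    | 0 =>
      have hg : (Symb.zero :: v).get ⟨0, by simp⟩ = Symb.zero := rfl
      rw [hg]
      refine ⟨?_, ?_, ?_⟩
      · constructor
        · intro h; exact absurd h (by simp)
        · intro h; exact absurd h h0i
      · constructor
        · intro h; exact absurd h (by simp)
        · rintro ⟨_, hN⟩; simp only [Nat.zero_add] at hN; exact absurd hN hNi
      · exact ⟨fun _ => ⟨h0i, by simpa using hNi⟩, fun _ => rfl⟩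
    | k + 1 =>
      have hk : k < v.length := by omega
      have hg : (Symb.zero :: v).get ⟨k + 1, by simp; omega⟩ =
          (v ++ [Symb.bullet]).get ⟨k, by simp; omega⟩ := by
        simp [List.get_eq_getElem, List.getElem_append_left hk]
      obtain ⟨c1, c2, c3⟩ := hA k (by simp; omega)
      rw [hg]
      refine ⟨?_, ?_, ?_⟩
      · rw [c1]; exact (mem_inc_succ Γ k).symm
      · rw [c2]
        simp only [NorthStep]
        rw [show k + 1 + N = (k + N) + 1 by omega, mem_inc_succ, mem_inc_succ]
      · rw [c3]
        rw [show k + 1 + N = (k + N) + 1 by omega]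
        rw [show (k + 1 ∉ inc Γ) = (k ∉ Γ) by rw [mem_inc_succ]]
        rw [show ((k + N) + 1 ∉ inc Γ) = (k + N ∉ Γ) by rw [mem_inc_succ]]
  · intro i hi
    simp only [List.length_cons] at hi
    match i with
    | 0 =>
      have hg : (Symb.one :: w).get ⟨0, by simp⟩ = Symb.one := rfl
      rw [hg]
      refine ⟨?_, ?_, ?_⟩
      · constructor
        · intro h; exact absurd h (by simp)
        · intro h; exact absurd h h0i
      · exact ⟨fun _ => ⟨h0i, by simpa using hMi⟩, fun _ => rfl⟩
      · constructor
        · intro h; exact absurd h (by simp)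
        · rintro ⟨_, hM⟩; simp only [Nat.zero_add] at hM; exact absurd hMi hM
    | k + 1 =>
      have hk : k < w.length := by omega
      have hg : (Symb.one :: w).get ⟨k + 1, by simp; omega⟩ =
          (w ++ [Symb.one]).get ⟨k, by simp; omega⟩ := by
        simp [List.get_eq_getElem, List.getElem_append_left hk]
      obtain ⟨c1, c2, c3⟩ := hB k (by simp; omega)
      rw [hg]
      refine ⟨?_, ?_, ?_⟩
      · rw [c1]; exact (mem_inc_succ Γ k).symm
      · rw [c2]
        simp only [EastStep]
        rw [show k + 1 + M = (k + M) + 1 by omega, mem_inc_succ, mem_inc_succ]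
      · rw [c3]
        rw [show k + 1 + M = (k + M) + 1 by omega]
        rw [show (k + 1 ∉ inc Γ) = (k ∉ Γ) by rw [mem_inc_succ]]
        rw [show ((k + M) + 1 ∉ inc Γ) = (k + M ∉ Γ) by rw [mem_inc_succ]]

lemma area_dec {M N : ℕ} {Δ : Set ℕ} (hMN : M + N ∈ Δ) :
    area M N (dec Δ) = area M N Δ := by
  unfold area
  have hinj : Function.Injective (fun c : ℕ => c + 1) := fun a b h => Nat.succ_injective h
  rw [← Set.ncard_image_of_injective {c : ℕ | M + N ≤ c ∧ c ∉ dec Δ} hinj]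
  congr 1
  ext d
  simp only [Set.mem_image, Set.mem_setOf_eq, dec]
  constructor
  · rintro ⟨c, ⟨h1, h2⟩, rfl⟩; exact ⟨by omega, h2⟩
  · rintro ⟨h1, h2⟩
    have hd : d ≠ M + N := fun h => h2 (h ▸ hMN)
    refine ⟨d - 1, ⟨by omega, ?_⟩, by omega⟩
    rw [show d - 1 + 1 = d by omega]
    exact h2

lemma pdinv_dec {M N : ℕ} {Δ : Set ℕ} (hMm : M ∈ Δ) (hNn : N ∉ Δ) :
    pdinv M N (dec Δ) = pdinv M N Δ := by
  unfold pdinv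
  have hinj : Function.Injective (fun p : ℕ × ℕ => (p.1 + 1, p.2 + 1)) := by
    rintro ⟨a1, a2⟩ ⟨b1, b2⟩ h
    simp only [Prod.mk.injEq] at h
    exact Prod.ext (by omega) (by omega)
  rw [← Set.ncard_image_of_injective
    {p : ℕ × ℕ | p.1 < p.2 ∧ M ≤ p.2 ∧ p.2 < p.1 + M ∧ NorthStep N (dec Δ) p.1 ∧ p.2 ∉ dec Δ}
    hinj]
  congr 1
  ext ⟨c, d⟩
  simp only [Set.mem_image, Set.mem_setOf_eq, NorthStep, dec, Prod.mk.injEq]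
  constructor
  · rintro ⟨⟨a, b⟩, ⟨h1, h2, h3, ⟨h4, h5⟩, h6⟩, hc, hd⟩
    subst hc hd
    refine ⟨by omega, by omega, by omega, ⟨h4, by rw [show a + 1 + N = a + N + 1 by omega]; exact h5⟩, h6⟩
  · rintro ⟨h1, h2, h3, ⟨h4, h5⟩, h6⟩
    have hc1 : 1 ≤ c := by
      rcases Nat.eq_zero_or_pos c with rfl | h
      · exact absurd (by simpa using h5) hNn
      · exact h
    have hdM : d ≠ M := fun h => h6 (h ▸ hMm)
    refine ⟨(c - 1, d - 1), ⟨by omega, by omega, by omega, ⟨?_, ?_⟩, ?_⟩, by omega, by omega⟩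
    · rw [show c - 1 + 1 = c by omega]; exact h4
    · rw [show c - 1 + N + 1 = c + N by omega]; exact h5
    · rw [show d - 1 + 1 = d by omega]; exact h6

/-- For words `v`, `w` of lengths `M−1`, `N−1`, decrementing is a
bijection from the `M,N`-invariant sets fitting `(0v, 1w)` onto those fitting
`(v•, w1)`; moreover, for `Δ` fitting `(0v, 1w)`, `area (dec Δ) = area Δ` and
`pdinv (dec Δ) = pdinv Δ`. -/
theorem dec_bijection_zero_one (M N : ℕ) (hM : 0 < M) (hN : 0 < N)
    (v w : List Symb) (hv : v.length + 1 = M) (hw : w.length + 1 = N) :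
    Set.BijOn dec
      {Δ : Set ℕ | Invariant M N Δ ∧ Fits M N Δ (Symb.zero :: v) (Symb.one :: w)}
      {Δ : Set ℕ | Invariant M N Δ ∧ Fits M N Δ (v ++ [Symb.bullet]) (w ++ [Symb.one])} ∧
    ∀ Δ : Set ℕ, Invariant M N Δ → Fits M N Δ (Symb.zero :: v) (Symb.one :: w) →
      area M N (dec Δ) = area M N Δ ∧ pdinv M N (dec Δ) = pdinv M N Δ := by
  constructor
  · refine ⟨?_, ?_, ?_⟩
    · rintro Δ ⟨hI, hf⟩
      exact ⟨invariant_dec hI, fits_dec hv hw hI hf⟩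
    · rintro Δ₁ ⟨hI1, hf1⟩ Δ₂ ⟨hI2, hf2⟩ heq
      have h1 := fits_src_facts hf1
      have h2 := fits_src_facts hf2
      ext n
      match n with
      | 0 => simp [h1.1, h2.1]
      | k + 1 =>
        have : (k ∈ dec Δ₁) = (k ∈ dec Δ₂) := by rw [heq]
        simpa [dec] using this
    · rintro Γ ⟨hI, hf⟩
      refine ⟨inc Γ, ⟨invariant_inc hI, fits_inc hv hw hI hf⟩, dec_inc Γ⟩
  · intro Δ hI hf
    obtain ⟨h0, hNn, hMm⟩ := fits_src_facts hf
    have hMN : M + N ∈ Δ := (hI.2 M hMm).2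
    exact ⟨area_dec hMN, pdinv_dec hMm hNn⟩
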